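/- arXiv:2101.03591 — 3 statements merged into one kernel-verified Lean document; each statement's English description precedes it below -/
import Mathlib

section
/- If a presentation Q is obtained from a presentation P by an elementary Tietze transformation (either (T1) adding a derivable generator or (T2) adding a derivable relation), then the inclusion morphism P → Q induces an isomorphism of presented monoids ⟦P⟧ ≅ ⟦Q⟧. -/
/-- A presentation of a monoid: a type of generators and a set of relations
between words (elements of the free monoid) over the generators. -/
structure MonPres : Type 1 where
  gen : Type
  rel : Set (FreeMonoid gen × FreeMonoid gen)

namespace MonPres

/-- The congruence on the free monoid generated by the relations. -/
def con (P : MonPres) : Con (FreeMonoid P.gen) :=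
  conGen fun u v => (u, v) ∈ P.rel

/-- The monoid presented by a presentation. -/
abbrev Presented (P : MonPres) : Type := P.con.Quotient

end MonPres

/-- A morphism of presentations. -/
structure MonPresHom (P Q : MonPres) where
  toFun : P.gen → Q.gen
  map_rel : ∀ p ∈ P.rel,
    (FreeMonoid.map toFun p.1, FreeMonoid.map toFun p.2) ∈ Q.rel

namespace MonPresHom

/-- The monoid homomorphism induced on presented monoids. -/
def induced {P Q : MonPres} (f : MonPresHom P Q) : P.Presented →* Q.Presented :=
  Con.lift P.con ((Con.mk' Q.con).comp (FreeMonoid.map f.toFun)) (by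
    refine Con.conGen_le.2 ?_
    intro x y hxy
    simp only [Con.ker_rel, MonoidHom.comp_apply, Con.coe_mk']
    exact (Con.eq _).mpr (ConGen.Rel.of _ _ (f.map_rel (x, y) hxy)))

/-- Identity morphism of presentations. -/
def id (P : MonPres) : MonPresHom P P where
  toFun := _root_.id
  map_rel := by intro p hp; simpa using hp

/-- Composition of morphisms of presentations. -/
def comp {P Q R : MonPres} (g : MonPresHom Q R) (f : MonPresHom P Q) :
    MonPresHom P R where
  toFun := g.toFun ∘ f.toFun
  map_rel := by
    intro p hp
    have h := g.map_rel _ (f.map_rel p hp)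
    simpa [FreeMonoid.map_comp] using h

end MonPresHom

/-- The standard presentation of a monoid `M`: generators are the elements of
`M`, and relations are all pairs of words whose products in `M` coincide. -/
def stdPres (M : Type) [Monoid M] : MonPres where
  gen := M
  rel := {p | FreeMonoid.lift (id : M → M) p.1 = FreeMonoid.lift (id : M → M) p.2}
namespace MonPres

/-- (T1) Adding a derivable generator: a fresh generator (`none`) together
with a relation `u → a`. -/
def addGen (P : MonPres) (u : FreeMonoid P.gen) : MonPres where
  gen := Option P.gen
  rel := (fun p : FreeMonoid P.gen × FreeMonoid P.gen =>
      (FreeMonoid.map some p.1, FreeMonoid.map some p.2)) '' P.rel ∪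
    {(FreeMonoid.map some u, FreeMonoid.of (none : Option P.gen))}

/-- (T2) Adding a relation `u → v`. -/
def addRel (P : MonPres) (u v : FreeMonoid P.gen) : MonPres where
  gen := P.gen
  rel := insert (u, v) P.rel

/-- The inclusion of `P` into `P.addGen u`. -/
def addGenIncl (P : MonPres) (u : FreeMonoid P.gen) :
    MonPresHom P (P.addGen u) where
  toFun := some
  map_rel := fun p hp => Or.inl ⟨p, hp, rfl⟩

/-- The inclusion of `P` into `P.addRel u v`. -/
def addRelIncl (P : MonPres) (u v : FreeMonoid P.gen) :
    MonPresHom P (P.addRel u v) where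
  toFun := _root_.id
  map_rel := by
    intro p hp
    simp only [addRel]
    right
    rw [FreeMonoid.map_id]
    exact hp

end MonPres

/-! Both inclusions are inverted, up to the congruences, by a substitution `σ` of words: for (T1)
`σ` replaces the new generator by `u`, for (T2) it is the identity. In both cases `σ` sends the
relations of the larger presentation into `∼_P` (for (T2) because `u ∼_P v`), so it descends to
an inverse of the induced morphism. -/

namespace MonPresHom

variable {P Q : MonPres}

theorem induced_bijective_of_substitution (f : MonPresHom P Q)
    (σ : FreeMonoid Q.gen →* FreeMonoid P.gen)
    (map_rel : ∀ p ∈ Q.rel, P.con (σ p.1) (σ p.2))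
    (left_inv : ∀ w, P.con (σ (FreeMonoid.map f.toFun w)) w)
    (right_inv : ∀ w, Q.con (FreeMonoid.map f.toFun (σ w)) w) :
    Function.Bijective f.induced := by
  let g : Q.Presented →* P.Presented :=
    Con.lift Q.con ((Con.mk' P.con).comp σ) <| Con.conGen_le.2 fun x y hxy =>
      (Con.eq P.con).2 (map_rel (x, y) hxy)
  refine Function.bijective_iff_has_inverse.2 ⟨g, fun x => ?_, fun x => ?_⟩
  · induction x using Con.induction_on with
    | H w => exact (Con.eq P.con).2 (left_inv w)
  · induction x using Con.induction_on with
    | H w => exact (Con.eq Q.con).2 (right_inv w)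

end MonPresHom

namespace MonPres

variable (P : MonPres)

def elimGen (u : FreeMonoid P.gen) : FreeMonoid (Option P.gen) →* FreeMonoid P.gen :=
  FreeMonoid.lift (Option.elim' u FreeMonoid.of)

theorem elimGen_map_some (u w : FreeMonoid P.gen) : P.elimGen u (FreeMonoid.map some w) = w :=
  DFunLike.congr_fun (FreeMonoid.hom_eq (f := (P.elimGen u).comp (FreeMonoid.map some))
    (g := MonoidHom.id _) fun _ => rfl) w

theorem addGen_con_map_some_elimGen (u : FreeMonoid P.gen) (w : FreeMonoid (Option P.gen)) :
    (P.addGen u).con (FreeMonoid.map some (P.elimGen u w)) w := by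
  have h : (Con.mk' (P.addGen u).con).comp ((FreeMonoid.map some).comp (P.elimGen u)) =
      Con.mk' (P.addGen u).con := by
    refine FreeMonoid.hom_eq fun
      | none => (Con.eq _).2 (ConGen.Rel.of _ _ (Or.inr rfl))
      | some _ => rfl
  exact (Con.eq _).1 (DFunLike.congr_fun h w)

theorem addGenIncl_induced_bijective (u : FreeMonoid P.gen) :
    Function.Bijective (P.addGenIncl u).induced := by
  refine (P.addGenIncl u).induced_bijective_of_substitution (P.elimGen u) ?_
    (fun w => (P.elimGen_map_some u w).symm ▸ P.con.refl w) (P.addGen_con_map_some_elimGen u)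
  rintro _ (⟨p, hp, rfl⟩ | rfl)
  · erw [P.elimGen_map_some u p.1, P.elimGen_map_some u p.2]
    exact ConGen.Rel.of _ _ hp
  · erw [P.elimGen_map_some u u]
    exact P.con.refl u

theorem addRelIncl_induced_bijective {u v : FreeMonoid P.gen} (huv : P.con u v) :
    Function.Bijective (P.addRelIncl u v).induced := by
  refine (P.addRelIncl u v).induced_bijective_of_substitution (MonoidHom.id _) ?_
    (fun w => ?_) (fun w => ?_)
  rintro _ (rfl | hp)
  · exact huv
  · exact ConGen.Rel.of _ _ hp
  · erw [FreeMonoid.map_id]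
    exact P.con.refl w
  · erw [FreeMonoid.map_id]
    exact (P.addRel u v).con.refl w

end MonPres

/-- an elementary Tietze transformation, (T1) adding a derivable
generator or (T2) adding a derivable relation, induces an isomorphism of
presented monoids via the inclusion morphism. -/
theorem stmt3 :
    (∀ (P : MonPres) (u : FreeMonoid P.gen),
      Function.Bijective (P.addGenIncl u).induced) ∧
    (∀ (P : MonPres) (u v : FreeMonoid P.gen), P.con u v →
      Function.Bijective (P.addRelIncl u v).induced) :=
  ⟨MonPres.addGenIncl_induced_bijective, fun P _ _ => P.addRelIncl_induced_bijective⟩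
end

section
/- Let w : P → Q be a morphism of reflexive presentations such that ⟦w⟧ : ⟦P⟧ → ⟦Q⟧ is an isomorphism, let R and S be finite reflexive presentations, and let i : R → S, f : R → P, g : S → Q be morphisms of presentations with w ∘ f = g ∘ i. Then there exist countable reflexive subpresentations P^ω ⊆ P and Q^ω ⊆ Q (i.e. with countable generator sets, included in P and Q respectively) such that w restricts to a morphism w^ω : P^ω → Q^ω inducing an isomorphism ⟦P^ω⟧ ≅ ⟦Q^ω⟧, f factors as the inclusion P^ω ⊆ P composed with a morphism f' : R → P^ω, g factors as the inclusion Q^ω ⊆ Q composed with a morphism g' : S → Q^ω, and w^ω ∘ f' = g' ∘ i. -/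
/-- A presentation is reflexive when every word is related to itself. -/
def MonPres.Reflexive (P : MonPres) : Prop :=
  ∀ u : FreeMonoid P.gen, (u, u) ∈ P.rel

/-- A reflexive presentation is finite when its set of generators is finite
and its set of relations, apart from the reflexivity relations, is finite. -/
def MonPres.FiniteRefl (P : MonPres) : Prop :=
  Finite P.gen ∧ ({p ∈ P.rel | p.1 ≠ p.2}).Finite

/-!
Every congruence `u ∼ v` in a presented monoid has a derivation that uses only finitely many
generators. Starting from the images of `f` and `g` (countable, as `R` and `S` have finitely many
generators), close up countably many times under: applying `w`; adding, for congruent words over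
the current generators of `P`, the generators of such a derivation; adding, for each current
generator `b` of `Q`, a word `u` with `w u ∼ b` and the generators of a derivation of this. The
resulting countable sets `A ⊆ P₁`, `B ⊆ Q₁` give subpresentations with `⟦P_A⟧ → ⟦P⟧` injective,
hence `⟦w_AB⟧` injective because `⟦w⟧` is, and with every generator of `Q_B` in the image of
`⟦w_AB⟧`, hence `⟦w_AB⟧` surjective.
-/

open Function

namespace FreeMonoid

variable {α β : Type*}

theorem map_injective {f : α → β} (hf : Injective f) : Injective (map f) :=
  List.map_injective_iff.2 hf

theorem map_eq_mul_iff {f : α → β} {x : FreeMonoid α} {u₁ u₂ : FreeMonoid β} :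
    x.map f = u₁ * u₂ ↔ ∃ x₁ x₂, x = x₁ * x₂ ∧ x₁.map f = u₁ ∧ x₂.map f = u₂ :=
  List.map_eq_append_iff

theorem mem_range_map_coe {s : Set α} {u : FreeMonoid α} :
    u ∈ Set.range (map ((↑) : s → α)) ↔ ∀ a ∈ u, a ∈ s :=
  Set.ext_iff.1 (Set.range_list_map_coe s) u

theorem finite_setOf_mem (u : FreeMonoid α) : {a | a ∈ u}.Finite :=
  List.finite_toSet u

theorem countable_setOf_forall_mem {s : Set α} (hs : s.Countable) :
    {u : FreeMonoid α | ∀ a ∈ u, a ∈ s}.Countable := by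
  have := hs.to_subtype
  exact (Set.countable_range (map ((↑) : s → α))).mono fun _ => mem_range_map_coe.2

end FreeMonoid

theorem Set.Countable.exists_superset_closed_finitary {γ : Type*} {A₀ : Set γ}
    (hA₀ : A₀.Countable) (c : Set γ → Set γ) (hc : ∀ F, F.Finite → (c F).Countable) :
    ∃ A, A₀ ⊆ A ∧ A.Countable ∧ ∀ F ⊆ A, F.Finite → c F ⊆ A := by
  let step : Set γ → Set γ := fun A => A ∪ ⋃ F ∈ {F | F.Finite ∧ F ⊆ A}, c F
  let S : ℕ → Set γ := fun n => step^[n] A₀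
  have hS_succ (n : ℕ) : S (n + 1) = step (S n) := iterate_succ_apply' step n A₀
  have hS_mono : Monotone S :=
    monotone_nat_of_le_succ fun n => (hS_succ n).symm ▸ subset_union_left
  have hS_countable (n : ℕ) : (S n).Countable := by
    induction n with
    | zero => exact hA₀
    | succ n ih =>
      rw [hS_succ]
      exact ih.union ((countable_ofPred_finite_subset ih).biUnion fun F hF => hc F hF.1)
  refine ⟨⋃ n, S n, subset_iUnion S 0, countable_iUnion hS_countable, fun F hFA hF => ?_⟩
  obtain ⟨n, hn⟩ := hS_mono.directed_le.exists_mem_subset_of_finset_subset_biUnion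
    (s := hF.toFinset) (by simpa using hFA)
  rw [hF.coe_toFinset] at hn
  have hF_mem : F ∈ {F | F.Finite ∧ F ⊆ S n} := ⟨hF, hn⟩
  calc c F ⊆ step (S n) := subset_union_of_subset_right (subset_biUnion_of_mem hF_mem) _
    _ = S (n + 1) := (hS_succ n).symm
    _ ⊆ ⋃ n, S n := subset_iUnion S _

namespace MonPres

abbrev sub (P : MonPres) (A : Set P.gen) : MonPres where
  gen := A
  rel := {p | (p.1.map Subtype.val, p.2.map Subtype.val) ∈ P.rel}

def incl (P : MonPres) (A : Set P.gen) : MonPresHom (P.sub A) P :=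
  ⟨Subtype.val, fun _ hp => hp⟩

theorem Reflexive.sub {P : MonPres} (hP : P.Reflexive) (A : Set P.gen) : (P.sub A).Reflexive :=
  fun _ => hP _

/-- `F` supports a derivation of `u ∼ v`: it can be replayed in every subpresentation whose
generators contain `F`. -/
def ConWithin (P : MonPres) (F : Set P.gen) (u v : FreeMonoid P.gen) : Prop :=
  ∀ ⦃A : Set P.gen⦄, F ⊆ A → ∀ x y : FreeMonoid A,
    x.map Subtype.val = u → y.map Subtype.val = v → (P.sub A).con x y

namespace ConWithin

variable {P : MonPres} {F G : Set P.gen} {u v w u₁ u₂ v₁ v₂ : FreeMonoid P.gen}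

theorem mono (h : P.ConWithin F u v) (hFG : F ⊆ G) : P.ConWithin G u v :=
  fun _ hGA => h (hFG.trans hGA)

theorem of_mem_rel (h : (u, v) ∈ P.rel) : P.ConWithin ∅ u v := by
  rintro A - x y rfl rfl
  exact ConGen.Rel.of _ _ h

theorem refl (u : FreeMonoid P.gen) : P.ConWithin ∅ u u := by
  rintro A - x y hx hy
  rw [FreeMonoid.map_injective Subtype.val_injective (hx.trans hy.symm)]
  exact (P.sub A).con.refl y

theorem symm (h : P.ConWithin F u v) : P.ConWithin F v u :=
  fun _ hFA x y hx hy => (h hFA y x hy hx).symm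

theorem trans (h₁ : P.ConWithin F u v) (h₂ : P.ConWithin G v w) :
    P.ConWithin (F ∪ G ∪ {a | a ∈ v}) u w := by
  intro A hA x z hx hz
  obtain ⟨y, hy⟩ := FreeMonoid.mem_range_map_coe.2 fun a ha => hA (Or.inr ha)
  exact (h₁ (fun a ha => hA (Or.inl (Or.inl ha))) x y hx hy).trans
    (h₂ (fun a ha => hA (Or.inl (Or.inr ha))) y z hy hz)

theorem mul (h₁ : P.ConWithin F u₁ v₁) (h₂ : P.ConWithin G u₂ v₂) :
    P.ConWithin (F ∪ G) (u₁ * u₂) (v₁ * v₂) := by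
  intro A hA x y hx hy
  obtain ⟨x₁, x₂, rfl, hx₁, hx₂⟩ := FreeMonoid.map_eq_mul_iff.1 hx
  obtain ⟨y₁, y₂, rfl, hy₁, hy₂⟩ := FreeMonoid.map_eq_mul_iff.1 hy
  exact (P.sub A).con.mul (h₁ (Set.subset_union_left.trans hA) x₁ y₁ hx₁ hy₁)
    (h₂ (Set.subset_union_right.trans hA) x₂ y₂ hx₂ hy₂)

end ConWithin

theorem exists_finite_conWithin {P : MonPres} {u v : FreeMonoid P.gen} (h : P.con u v) :
    ∃ F : Set P.gen, F.Finite ∧ P.ConWithin F u v := by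
  induction h with
  | of u v h => exact ⟨∅, Set.finite_empty, .of_mem_rel h⟩
  | refl u => exact ⟨∅, Set.finite_empty, .refl u⟩
  | symm _ ih =>
    obtain ⟨F, hF, h⟩ := ih
    exact ⟨F, hF, h.symm⟩
  | trans _ _ ih₁ ih₂ =>
    obtain ⟨F, hF, h₁⟩ := ih₁
    obtain ⟨G, hG, h₂⟩ := ih₂
    exact ⟨_, (hF.union hG).union (FreeMonoid.finite_setOf_mem _), h₁.trans h₂⟩
  | mul _ _ ih₁ ih₂ =>
    obtain ⟨F, hF, h₁⟩ := ih₁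
    obtain ⟨G, hG, h₂⟩ := ih₂
    exact ⟨_, hF.union hG, h₁.mul h₂⟩

end MonPres

namespace MonPresHom

variable {P Q R : MonPres}

theorem ext {f g : MonPresHom P Q} (h : f.toFun = g.toFun) : f = g := by
  cases f; cases g; cases h; rfl

theorem induced_mk (f : MonPresHom P Q) (u : FreeMonoid P.gen) :
    f.induced u = ((u.map f.toFun : FreeMonoid Q.gen) : Q.Presented) :=
  rfl

theorem induced_comp (g : MonPresHom Q R) (f : MonPresHom P Q) :
    (g.comp f).induced = g.induced.comp f.induced :=
  Con.lift_funext _ _ fun u => by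
    rw [MonoidHom.comp_apply, induced_mk, induced_mk, induced_mk, FreeMonoid.map_map]
    rfl

theorem induced_surjective_of_forall_of (f : MonPresHom P Q)
    (h : ∀ b, ∃ u : FreeMonoid P.gen, Q.con (u.map f.toFun) (.of b)) :
    Surjective f.induced := by
  intro z
  induction z using Con.induction_on with | H v => ?_
  induction v using FreeMonoid.inductionOn' with
  | one => exact ⟨1, map_one _⟩
  | of_mul b v ih =>
    obtain ⟨u, hu⟩ := h b
    obtain ⟨z, hz⟩ := ih
    refine ⟨u * z, ?_⟩
    rw [map_mul, hz, induced_mk, (Con.eq _).2 hu, Con.coe_mul]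

def codRestrict (f : MonPresHom P Q) (B : Set Q.gen) (h : ∀ a, f.toFun a ∈ B) :
    MonPresHom P (Q.sub B) where
  toFun a := ⟨f.toFun a, h a⟩
  map_rel p hp := by
    change (FreeMonoid.map _ (FreeMonoid.map _ p.1),
      FreeMonoid.map _ (FreeMonoid.map _ p.2)) ∈ Q.rel
    rw [FreeMonoid.map_map, FreeMonoid.map_map]
    exact f.map_rel p hp

def restrict (w : MonPresHom P Q) (A : Set P.gen) (B : Set Q.gen)
    (h : Set.MapsTo w.toFun A B) : MonPresHom (P.sub A) (Q.sub B) :=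
  (w.comp (P.incl A)).codRestrict B fun a => h a.2

end MonPresHom

theorem MonPres.incl_induced_injective_of_conWithin {P : MonPres} {A : Set P.gen}
    (hA : ∀ u v : FreeMonoid P.gen, (∀ a ∈ u, a ∈ A) → (∀ a ∈ v, a ∈ A) →
      P.con u v → P.ConWithin A u v) :
    Injective (P.incl A).induced := by
  intro x y hxy
  induction x using Con.induction_on with | H x => ?_
  induction y using Con.induction_on with | H y => ?_
  rw [MonPresHom.induced_mk, MonPresHom.induced_mk, Con.eq] at hxy
  exact (Con.eq _).2 <| hA _ _ (FreeMonoid.mem_range_map_coe.1 ⟨x, rfl⟩)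
    (FreeMonoid.mem_range_map_coe.1 ⟨y, rfl⟩) hxy subset_rfl x y rfl rfl

theorem MonPresHom.restrict_induced_bijective {P Q : MonPres} (w : MonPresHom P Q)
    (hw : Injective w.induced) {A : Set P.gen} {B : Set Q.gen} (hAB : Set.MapsTo w.toFun A B)
    (hA : Injective (P.incl A).induced)
    (hB : ∀ b ∈ B, ∃ u : FreeMonoid P.gen, (∀ a ∈ u, a ∈ A) ∧
      Q.ConWithin B (u.map w.toFun) (.of b)) :
    Bijective (w.restrict A B hAB).induced := by
  refine ⟨?_, induced_surjective_of_forall_of _ fun b => ?_⟩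
  · have hcomm : (Q.incl B).induced ∘ (w.restrict A B hAB).induced =
        w.induced ∘ (P.incl A).induced := by
      rw [← MonoidHom.coe_comp, ← MonoidHom.coe_comp, ← induced_comp, ← induced_comp]
      rfl
    exact Injective.of_comp (f := (Q.incl B).induced) (hcomm ▸ hw.comp hA)
  · obtain ⟨u, huA, hu⟩ := hB b b.2
    obtain ⟨x, rfl⟩ := FreeMonoid.mem_range_map_coe.2 huA
    exact ⟨x, hu subset_rfl _ _ (by rw [FreeMonoid.map_map, FreeMonoid.map_map]; rfl) rfl⟩

theorem MonPresHom.exists_con_map_of_induced_surjective {P Q : MonPres} (w : MonPresHom P Q)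
    (hw : Surjective w.induced) (v : FreeMonoid Q.gen) :
    ∃ u : FreeMonoid P.gen, Q.con (u.map w.toFun) v := by
  obtain ⟨z, hz⟩ := hw v
  induction z using Con.induction_on with | H u => exact ⟨u, (Con.eq _).1 hz⟩

theorem MonPresHom.exists_countable_closed_subsets {P Q : MonPres} (w : MonPresHom P Q)
    (hw : Surjective w.induced) {A₀ : Set P.gen} {B₀ : Set Q.gen}
    (hA₀ : A₀.Countable) (hB₀ : B₀.Countable) :
    ∃ (A : Set P.gen) (B : Set Q.gen), A₀ ⊆ A ∧ B₀ ⊆ B ∧ A.Countable ∧ B.Countable ∧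
      Set.MapsTo w.toFun A B ∧ Injective (P.incl A).induced ∧
      ∀ b ∈ B, ∃ u : FreeMonoid P.gen, (∀ a ∈ u, a ∈ A) ∧
        Q.ConWithin B (u.map w.toFun) (.of b) := by
  choose SP hSP_fin hSP using fun (u v : FreeMonoid P.gen) (h : P.con u v) =>
    MonPres.exists_finite_conWithin h
  choose L hL using fun b => w.exists_con_map_of_induced_surjective hw (.of b)
  choose SQ hSQ_fin hSQ using fun b => MonPres.exists_finite_conWithin (hL b)
  -- The generators of `P` and `Q` are closed up together in `P.gen ⊕ Q.gen`: a finite set `F`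
  -- demands the `w`-images of its `P`-generators, supports for the congruences between words in
  -- its `P`-generators, and for each of its `Q`-generators `b` the letters of the preimage `L b`
  -- and a support of `w (L b) ∼ b`.
  let c : Set (P.gen ⊕ Q.gen) → Set (P.gen ⊕ Q.gen) := fun F =>
    Sum.inr '' (w.toFun '' (Sum.inl ⁻¹' F)) ∪
    Sum.inl '' (⋃ (u ∈ {u | ∀ a ∈ u, a ∈ Sum.inl ⁻¹' F})
      (v ∈ {v | ∀ a ∈ v, a ∈ Sum.inl ⁻¹' F}) (h : P.con u v), SP u v h) ∪
    ⋃ b ∈ Sum.inr ⁻¹' F, (Sum.inl '' {a | a ∈ L b} ∪ Sum.inr '' SQ b)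
  have hc : ∀ F, F.Finite → (c F).Countable := by
    intro F hF
    have hFl := (hF.preimage Sum.inl_injective.injOn).countable
    have hwords := FreeMonoid.countable_setOf_forall_mem hFl
    refine (((hFl.image _).image _).union ?_).union ?_
    · exact (hwords.biUnion fun u _ => hwords.biUnion fun v _ =>
        Set.countable_iUnion fun h => (hSP_fin u v h).countable).image _
    · exact (hF.preimage Sum.inr_injective.injOn).countable.biUnion fun b _ =>
        ((FreeMonoid.finite_setOf_mem _).countable.image _).union
          ((hSQ_fin b).countable.image _)
  obtain ⟨C, hC₀, hC, hC_closed⟩ :=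
    ((hA₀.image Sum.inl).union (hB₀.image Sum.inr)).exists_superset_closed_finitary c hc
  refine ⟨Sum.inl ⁻¹' C, Sum.inr ⁻¹' C, fun a ha => hC₀ (.inl ⟨a, ha, rfl⟩),
    fun b hb => hC₀ (.inr ⟨b, hb, rfl⟩), hC.preimage Sum.inl_injective,
    hC.preimage Sum.inr_injective, fun a ha => ?_,
    MonPres.incl_induced_injective_of_conWithin ?_, ?_⟩
  · exact hC_closed {.inl a} (Set.singleton_subset_iff.2 ha) (Set.finite_singleton _)
      (.inl (.inl ⟨w.toFun a, ⟨a, Set.mem_singleton _, rfl⟩, rfl⟩))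
  · intro u v hu hv huv
    let F : Set (P.gen ⊕ Q.gen) := Sum.inl '' ({a | a ∈ u} ∪ {a | a ∈ v})
    have hF : F ⊆ C := by
      rintro _ ⟨a, ha | ha, rfl⟩
      exacts [hu a ha, hv a ha]
    refine (hSP u v huv).mono fun a ha => hC_closed F hF ?_ (.inl (.inr ⟨a, ?_, rfl⟩))
    · exact ((FreeMonoid.finite_setOf_mem u).union (FreeMonoid.finite_setOf_mem v)).image _
    · exact Set.mem_biUnion (fun a ha => ⟨a, .inl ha, rfl⟩) <|
        Set.mem_biUnion (fun a ha => ⟨a, .inr ha, rfl⟩) (Set.mem_iUnion.2 ⟨huv, ha⟩)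
  · intro b hb
    have hcC := hC_closed {.inr b} (Set.singleton_subset_iff.2 hb) (Set.finite_singleton _)
    refine ⟨L b, fun a ha => hcC (.inr (Set.mem_biUnion rfl (.inl ⟨a, ha, rfl⟩))),
      (hSQ b).mono fun q hq => hcC (.inr (Set.mem_biUnion rfl (.inr ⟨q, hq, rfl⟩)))⟩

theorem stmt10_general (P Q R S : MonPres)
    (hP : P.Reflexive) (hQ : Q.Reflexive)
    (hRfin : R.FiniteRefl) (hSfin : S.FiniteRefl)
    (w : MonPresHom P Q) (hw : Function.Bijective w.induced)
    (i : MonPresHom R S) (f : MonPresHom R P) (g : MonPresHom S Q)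
    (hsq : w.comp f = g.comp i) :
    ∃ (Pω Qω : MonPres) (ιP : MonPresHom Pω P) (ιQ : MonPresHom Qω Q),
      Pω.Reflexive ∧ Qω.Reflexive ∧
      Countable Pω.gen ∧ Countable Qω.gen ∧
      Function.Injective ιP.toFun ∧ Function.Injective ιQ.toFun ∧
      ∃ (wω : MonPresHom Pω Qω) (f' : MonPresHom R Pω) (g' : MonPresHom S Qω),
        ιQ.comp wω = w.comp ιP ∧
        Function.Bijective wω.induced ∧
        ιP.comp f' = f ∧ ιQ.comp g' = g ∧
        wω.comp f' = g'.comp i := by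
  have : Finite R.gen := hRfin.1
  have : Finite S.gen := hSfin.1
  obtain ⟨A, B, hfA, hgB, hA, hB, hAB, hA_inj, hB_gen⟩ := w.exists_countable_closed_subsets hw.2
    (Set.countable_range f.toFun) (Set.countable_range g.toFun)
  refine ⟨P.sub A, Q.sub B, P.incl A, Q.incl B, hP.sub A, hQ.sub B, hA.to_subtype,
    hB.to_subtype, Subtype.val_injective, Subtype.val_injective, w.restrict A B hAB,
    f.codRestrict A fun r => hfA ⟨r, rfl⟩, g.codRestrict B fun s => hgB ⟨s, rfl⟩, rfl,
    w.restrict_induced_bijective hw.1 hAB hA_inj hB_gen, rfl, rfl, ?_⟩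
  exact MonPresHom.ext <| funext fun r =>
    Subtype.ext (congrFun (congrArg MonPresHom.toFun hsq) r)

/-- given a weak equivalence `w : P → Q` between reflexive
presentations and a commutative square over it whose left side `i : R → S`
has finite reflexive source and target, the square factors through a weak
equivalence `w^ω : P^ω → Q^ω` between countable reflexive subpresentations of
`P` and `Q`. -/
theorem stmt10 (P Q R S : MonPres)
    (hP : P.Reflexive) (hQ : Q.Reflexive) (hR : R.Reflexive) (hS : S.Reflexive)
    (hRfin : R.FiniteRefl) (hSfin : S.FiniteRefl)
    (w : MonPresHom P Q) (hw : Function.Bijective w.induced)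
    (i : MonPresHom R S) (f : MonPresHom R P) (g : MonPresHom S Q)
    (hsq : w.comp f = g.comp i) :
    ∃ (Pω Qω : MonPres) (ιP : MonPresHom Pω P) (ιQ : MonPresHom Qω Q),
      Pω.Reflexive ∧ Qω.Reflexive ∧
      Countable Pω.gen ∧ Countable Qω.gen ∧
      Function.Injective ιP.toFun ∧ Function.Injective ιQ.toFun ∧
      ∃ (wω : MonPresHom Pω Qω) (f' : MonPresHom R Pω) (g' : MonPresHom S Qω),
        ιQ.comp wω = w.comp ιP ∧
        Function.Bijective wω.induced ∧
        ιP.comp f' = f ∧ ιQ.comp g' = g ∧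
        wω.comp f' = g'.comp i :=
  stmt10_general P Q R S hP hQ hRfin hSfin w hw i f g hsq
end

section
/- In a model category in which every object is cofibrant, every isomorphism in the homotopy category is the localization of a cospan of trivial cofibrations: for the localization functor L : M → Ho(M) at the weak equivalences, every isomorphism φ : L(X) ≅ L(Y) in Ho(M) admits an object Z together with trivial cofibrations i : X → Z and j : Y → Z such that φ equals L(i) composed with the inverse of the isomorphism L(j). -/
/-! A fibrant replacement `ρ : Y ⟶ Y'` turns `φ` into a map `L X ⟶ L Y'`, which by the
fundamental lemma is `L g` for some `g : X ⟶ Y'`. Weak equivalences between such objects are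
saturated: a fibration `p` of bifibrant objects with `L p` invertible has a homotopy inverse,
which the covering homotopy property straightens into a section `s`; then `p ≫ s` is homotopic
to the identity, hence a weak equivalence, and `p` is a retract of it. So `g` is a weak
equivalence, and factoring `(g, ρ) : X ⨿ Y ⟶ Y'` as a cofibration followed by a trivial
fibration yields the cospan, its legs being cofibrations because every object is cofibrant. -/

open CategoryTheory CategoryTheory.Limits

universe v u

/-- A weak factorization system: the two classes lift against each other,
each class is determined by the lifting property against the other, and
every morphism factors accordingly. -/
structure IsWFS {C : Type u} [Category.{v} C] (L R : MorphismProperty C) :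
    Prop where
  lift : ∀ ⦃A B X Y : C⦄ (i : A ⟶ B) (p : X ⟶ Y), L i → R p →
    HasLiftingProperty i p
  llp : ∀ ⦃A B : C⦄ (i : A ⟶ B),
    (∀ ⦃X Y : C⦄ (p : X ⟶ Y), R p → HasLiftingProperty i p) → L i
  rlp : ∀ ⦃X Y : C⦄ (p : X ⟶ Y),
    (∀ ⦃A B : C⦄ (i : A ⟶ B), L i → HasLiftingProperty i p) → R p
  factor : ∀ ⦃X Y : C⦄ (f : X ⟶ Y),
    ∃ (Z : C) (i : X ⟶ Z) (p : Z ⟶ Y), L i ∧ R p ∧ i ≫ p = f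

/-- A model structure on a category: weak equivalences satisfying 2-out-of-3,
cofibrations and fibrations, such that (cofibrations, trivial fibrations) and
(trivial cofibrations, fibrations) are weak factorization systems.
(The ambient category is required to be complete and cocomplete in the
statements below.) -/
structure ModelStruct (C : Type u) [Category.{v} C] where
  W : MorphismProperty C
  Cof : MorphismProperty C
  Fib : MorphismProperty C
  weq_comp : ∀ ⦃X Y Z : C⦄ (f : X ⟶ Y) (g : Y ⟶ Z), W f → W g → W (f ≫ g)
  weq_of_post : ∀ ⦃X Y Z : C⦄ (f : X ⟶ Y) (g : Y ⟶ Z), W g → W (f ≫ g) → W f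
  weq_of_pre : ∀ ⦃X Y Z : C⦄ (f : X ⟶ Y) (g : Y ⟶ Z), W f → W (f ≫ g) → W g
  wfs_cof_tfib : IsWFS Cof (fun _ _ p => Fib p ∧ W p)
  wfs_tcof_fib : IsWFS (fun _ _ i => Cof i ∧ W i) Fib

/-- An object is cofibrant when the morphism from the initial object is a
cofibration. -/
def ModelStruct.Cofibrant {C : Type u} [Category.{v} C] [HasInitial C]
    (M : ModelStruct C) (X : C) : Prop :=
  M.Cof (initial.to X)

open HomotopicalAlgebra MorphismProperty

section

variable {C : Type u} [Category.{v} C]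

lemma IsWFS.isWeakFactorizationSystem {L R : MorphismProperty C} (h : IsWFS L R) :
    IsWeakFactorizationSystem L R where
  rlp := by
    ext X Y p
    exact ⟨h.rlp p, fun hp A B i hi => h.lift i p hi hp⟩
  llp := by
    ext A B i
    exact ⟨h.llp i, fun hi X Y p hp => h.lift i p hi hp⟩
  hasFactorization := ⟨fun f => by
    obtain ⟨Z, i, p, hi, hp, fac⟩ := h.factor f
    exact ⟨{ Z, i, p, fac, hi, hp }⟩⟩

abbrev ModelStruct.toModelCategory (M : ModelStruct C) [HasFiniteLimits C]
    [HasFiniteColimits C] : ModelCategory C :=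
  letI : CategoryWithWeakEquivalences C := ⟨M.W⟩
  letI : CategoryWithCofibrations C := ⟨M.Cof⟩
  letI : CategoryWithFibrations C := ⟨M.Fib⟩
  haveI : (weakEquivalences C).HasTwoOutOfThreeProperty :=
    { comp_mem := fun f g => M.weq_comp f g
      of_postcomp := fun f g => M.weq_of_post f g
      of_precomp := fun f g => M.weq_of_pre f g }
  haveI : IsWeakFactorizationSystem (cofibrations C) (trivialFibrations C) :=
    M.wfs_cof_tfib.isWeakFactorizationSystem
  haveI : IsWeakFactorizationSystem (trivialCofibrations C) (fibrations C) :=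
    M.wfs_tcof_fib.isWeakFactorizationSystem
  ModelCategory.mk' C

end

namespace HomotopicalAlgebra

variable {C : Type*} [Category* C] [ModelCategory C] {H : Type*} [Category* H]
  (L : C ⥤ H) [L.IsLocalization (weakEquivalences C)]

lemma weakEquivalence_of_fibration_of_isIso_map {Z Y : C} [IsCofibrant Z] [IsFibrant Z]
    [IsCofibrant Y] [IsFibrant Y] (p : Z ⟶ Y) [Fibration p] [IsIso (L.map p)] :
    WeakEquivalence p := by
  obtain ⟨s₀, hs₀⟩ := map_surjective_of_isLocalization L Y Z (inv (L.map p))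
  have htpy : LeftHomotopyRel (s₀ ≫ p) (𝟙 Y) := by
    rw [LeftHomotopyRel.iff_map_eq L]
    simp [hs₀]
  obtain ⟨P, _, ⟨h⟩⟩ := htpy.exists_good_cylinder
  obtain ⟨s, h', hh'⟩ := Cylinder.LeftHomotopy.covering_homotopy h p s₀
  have hs : s ≫ p = 𝟙 Y := by simpa using P.i₁ ≫= hh'
  have hLs : L.map s = inv (L.map p) := by
    rw [← hs₀]
    exact ((LeftHomotopyRel.iff_map_eq L _ _).1 h'.leftHomotopyRel).symm
  have hps : WeakEquivalence (p ≫ s) := by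
    obtain ⟨_, ⟨h''⟩⟩ : LeftHomotopyRel (𝟙 Z) (p ≫ s) := by
      rw [LeftHomotopyRel.iff_map_eq L]
      simp [hLs]
    exact h''.weakEquivalence_iff.1 inferInstance
  have retract : RetractArrow p (p ≫ s) :=
    { i := Arrow.homMk (𝟙 Z) s
      r := Arrow.homMk (𝟙 Z) p (by simp [hs]) }
  rw [weakEquivalence_iff] at hps ⊢
  exact (weakEquivalences C).of_retract retract hps

lemma weakEquivalence_of_isIso_map {X Y : C} [IsCofibrant X] [IsCofibrant Y] [IsFibrant Y]
    (f : X ⟶ Y) [IsIso (L.map f)] : WeakEquivalence f := by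
  let d := factorizationData (trivialCofibrations C) (fibrations C) f
  have : IsCofibrant d.Z := isCofibrant_of_cofibration d.i
  have : IsFibrant d.Z := isFibrant_of_fibration d.p
  have : IsIso (L.map d.i) := Localization.inverts L (weakEquivalences C) d.i d.hi.2
  have : IsIso (L.map d.i ≫ L.map d.p) := by rw [← L.map_comp, d.fac]; infer_instance
  have : IsIso (L.map d.p) := IsIso.of_isIso_comp_left (L.map d.i) _
  have := weakEquivalence_of_fibration_of_isIso_map L d.p
  rw [← d.fac]
  infer_instance

theorem exists_trivialCofibration_cospan_of_iso {X Y : C} [IsCofibrant X] [IsCofibrant Y]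
    (φ : L.obj X ≅ L.obj Y) :
    ∃ (Z : C) (i : X ⟶ Z) (j : Y ⟶ Z), Cofibration i ∧ WeakEquivalence i ∧
      Cofibration j ∧ WeakEquivalence j ∧ φ.hom ≫ L.map j = L.map i := by
  obtain ⟨Y', _, ρ, _, _⟩ := FibrantObject.HoCat.exists_resolution Y
  have : IsCofibrant Y' := isCofibrant_of_cofibration ρ
  have : IsIso (L.map ρ) := Localization.inverts L _ ρ (mem_weakEquivalences ρ)
  obtain ⟨g, hg⟩ := map_surjective_of_isLocalization L X Y' (φ.hom ≫ L.map ρ)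
  have : IsIso (L.map g) := by rw [hg]; infer_instance
  have := weakEquivalence_of_isIso_map L g
  let d := factorizationData (cofibrations C) (trivialFibrations C) (coprod.desc g ρ)
  have hi : (coprod.inl ≫ d.i) ≫ d.p = g := by rw [Category.assoc, d.fac, coprod.inl_desc]
  have hj : (coprod.inr ≫ d.i) ≫ d.p = ρ := by rw [Category.assoc, d.fac, coprod.inr_desc]
  have : IsIso (L.map d.p) := Localization.inverts L _ d.p (mem_weakEquivalences d.p)
  refine ⟨d.Z, coprod.inl ≫ d.i, coprod.inr ≫ d.i, inferInstance,
    weakEquivalence_of_postcomp_of_fac hi, inferInstance,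
    weakEquivalence_of_postcomp_of_fac hj, ?_⟩
  rw [← cancel_mono (L.map d.p), Category.assoc, ← L.map_comp, ← L.map_comp, hi, hj, hg]

end HomotopicalAlgebra

/-- in a model category in which every object is cofibrant,
every isomorphism in the homotopy category (the localization at the weak
equivalences, with localization functor `M.W.Q`) is the localization of a
cospan of trivial cofibrations: `φ = L(i) ≫ (L(j))⁻¹`, expressed by
`φ.hom ≫ L(j) = L(i)` together with the invertibility of `L(j)`. -/
theorem stmt16 {C : Type u} [Category.{v} C] [HasLimits C] [HasColimits C]
    (M : ModelStruct C) (hcof : ∀ X : C, M.Cofibrant X)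
    (X Y : C) (φ : M.W.Q.obj X ≅ M.W.Q.obj Y) :
    ∃ (Z : C) (i : X ⟶ Z) (j : Y ⟶ Z),
      M.Cof i ∧ M.W i ∧ M.Cof j ∧ M.W j ∧
      IsIso (M.W.Q.map j) ∧ φ.hom ≫ M.W.Q.map j = M.W.Q.map i := by
  let _ := M.toModelCategory
  have : M.W.Q.IsLocalization (weakEquivalences C) := inferInstanceAs (M.W.Q.IsLocalization M.W)
  have (X : C) : IsCofibrant X := ⟨hcof X⟩
  obtain ⟨Z, i, j, hi, hwi, hj, hwj, fac⟩ := exists_trivialCofibration_cospan_of_iso M.W.Q φ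
  exact ⟨Z, i, j, hi.mem, hwi.mem, hj.mem, hwj.mem, Localization.inverts M.W.Q M.W j hwj.mem, fac⟩
end
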